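/- Fix an integer d ≥ 2 and a weakly decreasing tuple x_1 ≥ … ≥ x_d of real numbers with ∑_{j=1}^d x_j = 0 and x_1 > x_d. Let W^μ = {w ∈ S_d : w(a) < w(a+1) whenever 1 ≤ a ≤ d−1 and x_a = x_{a+1}}. Then for every w ∈ W^μ: 2·l(w) + #{m ∈ {1,…,d−1} : S_m(w) > 0} ≥ d − 1, with equality if and only if w is the identity permutation. -/

import Mathlib

open Finset


-- Lemma A: strict positivity of identity partial sums
lemma auxA (d : ℕ) (hd : 2 ≤ d) (x : Fin d → ℝ) (hx : Antitone x)
    (hsum : ∑ j : Fin d, x j = 0)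
    (hne : x ⟨0, Nat.lt_of_lt_of_le Nat.zero_lt_two hd⟩ > x ⟨d - 1, Nat.sub_lt (Nat.lt_of_lt_of_le Nat.zero_lt_two hd) Nat.one_pos⟩)
    (m : ℕ) (hm1 : 1 ≤ m) (hm2 : m ≤ d - 1) :
    0 < ∑ j ∈ univ.filter (fun j : Fin d => (j : ℕ) < m), x j := by
  set A := univ.filter (fun j : Fin d => (j : ℕ) < m) with hA
  set B := univ.filter (fun j : Fin d => ¬ (j : ℕ) < m) with hB
  have hT : ∑ j ∈ B, x j = - ∑ j ∈ A, x j := by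
    have := Finset.sum_filter_add_sum_filter_not univ (fun j : Fin d => (j : ℕ) < m) x
    rw [hsum] at this
    linarith
  have hpos : 0 < ∑ j ∈ A, ∑ k ∈ B, (x j - x k) := by
    apply Finset.sum_pos'
    · intro j hj
      apply Finset.sum_nonneg
      intro k hk
      have hj' : (j : ℕ) < m := (Finset.mem_filter.1 hj).2
      have hk' : ¬ (k : ℕ) < m := (Finset.mem_filter.1 hk).2
      have : j ≤ k := by
        rw [Fin.le_def]; omega
      linarith [hx this]
    · refine ⟨⟨0, by omega⟩, ?_, ?_⟩
      · simp [hA]; omega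
      · apply Finset.sum_pos'
        · intro k hk
          have hk' : ¬ (k : ℕ) < m := (Finset.mem_filter.1 hk).2
          have : (⟨0, by omega⟩ : Fin d) ≤ k := by rw [Fin.le_def]; exact Nat.zero_le _
          linarith [hx this]
        · refine ⟨⟨d - 1, by omega⟩, ?_, ?_⟩
          · simp [hB]; omega
          · linarith
  have hexp : ∑ j ∈ A, ∑ k ∈ B, (x j - x k) = (d : ℝ) * ∑ j ∈ A, x j := by
    have hcard : (A.card : ℝ) + (B.card : ℝ) = (d : ℝ) := by
      have := Finset.card_filter_add_card_filter_not
        (s := (univ : Finset (Fin d))) (p := fun j : Fin d => (j : ℕ) < m)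
      rw [Finset.card_univ, Fintype.card_fin] at this
      push_cast [← this]; ring
    calc ∑ j ∈ A, ∑ k ∈ B, (x j - x k)
        = ∑ j ∈ A, ((B.card : ℝ) * x j - ∑ k ∈ B, x k) := by
          apply Finset.sum_congr rfl; intro j _
          rw [Finset.sum_sub_distrib, Finset.sum_const, nsmul_eq_mul]
      _ = (B.card : ℝ) * ∑ j ∈ A, x j - (A.card : ℝ) * ∑ k ∈ B, x k := by
          rw [Finset.sum_sub_distrib, ← Finset.mul_sum, Finset.sum_const, nsmul_eq_mul]
      _ = (d : ℝ) * ∑ j ∈ A, x j := by rw [hT]; linear_combination (∑ j ∈ A, x j) * hcard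
  rw [hexp] at hpos
  have hd0 : (0 : ℝ) < d := by positivity
  nlinarith

-- Lemma B
lemma auxB (d : ℕ) (x : Fin d → ℝ) (w : Equiv.Perm (Fin d)) (m : ℕ)
    (h : ∀ p : Fin d, m ≤ (p : ℕ) → m ≤ ((w p : Fin d) : ℕ)) :
    ∑ j ∈ univ.filter (fun j : Fin d => (j : ℕ) < m), x (w⁻¹ j)
      = ∑ j ∈ univ.filter (fun j : Fin d => (j : ℕ) < m), x j := by
  set B := univ.filter (fun j : Fin d => (j : ℕ) < m) with hB
  have hinj : Function.Injective (fun j : Fin d => w⁻¹ j) := fun a b hab => by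
    simpa using w⁻¹.injective hab
  have hsub : B.image (fun j => w⁻¹ j) ⊆ B := by
    intro i hi
    obtain ⟨j, hj, rfl⟩ := Finset.mem_image.1 hi
    simp only [hB, Finset.mem_filter, Finset.mem_univ, true_and] at hj ⊢
    by_contra hc
    push_neg at hc
    have := h (w⁻¹ j) hc
    simp only [Equiv.Perm.inv_def, Equiv.apply_symm_apply] at this
    omega
  have heq : B.image (fun j => w⁻¹ j) = B :=
    Finset.eq_of_subset_of_card_le hsub (by rw [Finset.card_image_of_injective _ hinj])
  calc ∑ j ∈ B, x (w⁻¹ j) = ∑ i ∈ B.image (fun j => w⁻¹ j), x i := by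
        rw [Finset.sum_image (fun a _ b _ hab => hinj hab)]
    _ = ∑ j ∈ B, x j := by rw [heq]

-- Lemma C1
lemma auxC1 (d : ℕ) (hd : 2 ≤ d) (w : Equiv.Perm (Fin d)) :
    ∑ m ∈ Icc 1 (d - 1),
        (univ.filter (fun p : Fin d => m ≤ (p : ℕ) ∧ ((w p : Fin d) : ℕ) < m)).card
      = ∑ p : Fin d, ((p : ℕ) - ((w p : Fin d) : ℕ)) := by
  simp_rw [Finset.card_filter]
  rw [Finset.sum_comm]
  refine Finset.sum_congr rfl fun p _ => ?_
  rw [← Finset.card_filter]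
  have : (Icc 1 (d-1)).filter (fun m => m ≤ (p : ℕ) ∧ ((w p : Fin d) : ℕ) < m)
      = Ioc ((w p : Fin d) : ℕ) (p : ℕ) := by
    ext m
    simp only [Finset.mem_filter, Finset.mem_Icc, Finset.mem_Ioc]
    have h1 := p.isLt
    have h2 := (w p).isLt
    omega
  rw [this, Nat.card_Ioc]

-- Lemma C2
lemma auxC2 (d : ℕ) (w : Equiv.Perm (Fin d)) :
    (univ.filter (fun p : Fin d × Fin d => p.1 < p.2 ∧ w p.2 < w p.1)).card
      = ∑ p : Fin d, (univ.filter (fun q : Fin d => q < p ∧ w p < w q)).card := by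
  rw [Finset.card_eq_sum_card_fiberwise
    (f := Prod.snd) (t := univ) (fun _ _ => Finset.mem_univ _)]
  refine Finset.sum_congr rfl fun p _ => ?_
  refine Finset.card_nbij' Prod.fst (fun q => (q, p)) ?_ ?_ ?_ ?_
  · intro a ha
    simp only [Finset.mem_coe, Finset.mem_filter, Finset.mem_univ, true_and] at ha ⊢
    obtain ⟨⟨h1, h2⟩, h3⟩ := ha
    rw [← h3]; exact ⟨h1, h2⟩
  · intro q hq
    simp only [Finset.mem_coe, Finset.mem_filter, Finset.mem_univ, true_and] at hq ⊢
    exact ⟨⟨hq.1, hq.2⟩, trivial⟩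
  · intro a ha
    simp only [Finset.mem_coe, Finset.mem_filter, Finset.mem_univ, true_and] at ha
    exact Prod.ext rfl ha.2.symm
  · intro q _
    rfl

-- Lemma C3
lemma auxC3 (d : ℕ) (w : Equiv.Perm (Fin d)) (p : Fin d) :
    (p : ℕ) - ((w p : Fin d) : ℕ)
      ≤ (univ.filter (fun q : Fin d => q < p ∧ w p < w q)).card := by
  have hIio : (Finset.Iio p).card = (p : ℕ) := Fin.card_Iio _
  have hsub : Finset.Iio p ⊆
      (univ.filter (fun q : Fin d => q < p ∧ w p < w q))
        ∪ (univ.filter (fun q : Fin d => w q < w p)) := by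
    intro q hq
    have hq' : q < p := Finset.mem_Iio.1 hq
    rcases lt_or_ge (w p) (w q) with h | h
    · exact Finset.mem_union_left _ (by simp [hq', h])
    · have : w q ≠ w p := fun hc => absurd (w.injective hc) (ne_of_lt hq')
      exact Finset.mem_union_right _ (by simp [lt_of_le_of_ne h this])
  have h2 : (univ.filter (fun q : Fin d => w q < w p)).card ≤ ((w p : Fin d) : ℕ) := by
    rw [← Fin.card_Iio (w p)]
    apply Finset.card_le_card_of_injOn w
    · intro q hq
      simp only [Finset.mem_coe, Finset.mem_filter] at hq
      exact Finset.mem_Iio.2 hq.2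
    · exact Function.Injective.injOn w.injective
  have := (Finset.card_le_card hsub).trans (Finset.card_union_le _ _)
  omega

-- Lemma D
lemma auxD (d : ℕ) (w : Equiv.Perm (Fin d))
    (h : (univ.filter (fun p : Fin d × Fin d => p.1 < p.2 ∧ w p.2 < w p.1)).card = 0) :
    w = 1 := by
  rw [Finset.card_eq_zero, Finset.filter_eq_empty_iff] at h
  have hmono : StrictMono (⇑w) := by
    intro a b hab
    have := h (Finset.mem_univ (a, b))
    simp only [not_and] at this
    have h2 := this hab
    rcases lt_or_ge (w a) (w b) with h3 | h3
    · exact h3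
    · have : w b ≠ w a := fun hc => absurd (w.injective hc) (ne_of_gt hab)
      exact absurd (lt_of_le_of_ne h3 this) h2
  have hr : Set.range (⇑w) = Set.range (id : Fin d → Fin d) := by
    rw [Set.range_id, Set.range_eq_univ]
    exact w.surjective
  have inst : WellFoundedLT (Fin d) := inferInstance
  have := (@StrictMono.range_inj (Fin d) (Fin d) _ _ inst ⇑w id hmono strictMono_id).1 hr
  ext p
  simp [this]

/-- **Statement 15.** For a weakly decreasing, non-constant tuple `x₁ ≥ … ≥ x_d` summing to
zero and a Kostant representative `w ∈ W^μ`, one has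
`2·l(w) + #{m ∈ {1,…,d−1} : S_m(w) > 0} ≥ d − 1`, with equality iff `w = 1`. -/
theorem two_length_add_card_pos_partial_sums_ge
    (d : ℕ) (hd : 2 ≤ d) (x : Fin d → ℝ) (hx : Antitone x)
    (hsum : ∑ j : Fin d, x j = 0)
    (hne : x ⟨0, by omega⟩ > x ⟨d - 1, by omega⟩)
    (Wmu : Set (Equiv.Perm (Fin d)))
    (hWmu : Wmu = {w : Equiv.Perm (Fin d) | ∀ (a : ℕ) (ha : a + 1 < d),
      x ⟨a, by omega⟩ = x ⟨a + 1, ha⟩ →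
        ((w ⟨a, by omega⟩ : Fin d) : ℕ) < ((w ⟨a + 1, ha⟩ : Fin d) : ℕ)})
    (S : Equiv.Perm (Fin d) → ℕ → ℝ)
    (hS : ∀ (w : Equiv.Perm (Fin d)) (m : ℕ),
      S w m = ∑ j ∈ Finset.univ.filter (fun j : Fin d => (j : ℕ) < m), x (w⁻¹ j))
    (len : Equiv.Perm (Fin d) → ℕ)
    (hlen : ∀ w : Equiv.Perm (Fin d), len w =
      (Finset.univ.filter (fun p : Fin d × Fin d => p.1 < p.2 ∧ w p.2 < w p.1)).card) :
    ∀ w ∈ Wmu,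
      d - 1 ≤ 2 * len w + ((Finset.Icc 1 (d - 1)).filter (fun m => 0 < S w m)).card ∧
      (2 * len w + ((Finset.Icc 1 (d - 1)).filter (fun m => 0 < S w m)).card = d - 1 ↔
        w = 1) := by
  intro w _
  set N := ((Finset.Icc 1 (d - 1)).filter (fun m => 0 < S w m)).card with hN
  set t := ((Finset.Icc 1 (d - 1)).filter (fun m => ¬ 0 < S w m)).card with ht
  have hIcc : (Finset.Icc 1 (d - 1)).card = d - 1 := by
    rw [Nat.card_Icc]; omega
  have hNt : N + t = d - 1 := by
    rw [hN, ht, Finset.card_filter_add_card_filter_not, hIcc]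
  -- t ≤ len w
  have hbad : ∀ m ∈ (Finset.Icc 1 (d - 1)).filter (fun m => ¬ 0 < S w m),
      1 ≤ (univ.filter (fun p : Fin d => m ≤ (p : ℕ) ∧ ((w p : Fin d) : ℕ) < m)).card := by
    intro m hm
    rw [Finset.mem_filter, Finset.mem_Icc] at hm
    obtain ⟨⟨hm1, hm2⟩, hm3⟩ := hm
    rw [Nat.one_le_iff_ne_zero]
    intro hc
    rw [Finset.card_eq_zero, Finset.filter_eq_empty_iff] at hc
    have h : ∀ p : Fin d, m ≤ (p : ℕ) → m ≤ ((w p : Fin d) : ℕ) := by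
      intro p hp
      have := hc (Finset.mem_univ p)
      simp only [not_and, not_lt] at this
      exact this hp
    have := auxB d x w m h
    rw [← hS w m] at this
    exact hm3 (this ▸ auxA d hd x hx hsum hne m hm1 hm2)
  have htle : t ≤ len w := by
    have h1 : t ≤ ∑ m ∈ Finset.Icc 1 (d - 1),
        (univ.filter (fun p : Fin d => m ≤ (p : ℕ) ∧ ((w p : Fin d) : ℕ) < m)).card := by
      calc t = ∑ m ∈ (Finset.Icc 1 (d - 1)).filter (fun m => ¬ 0 < S w m), 1 := by
              rw [ht, Finset.card_eq_sum_ones]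
        _ ≤ ∑ m ∈ (Finset.Icc 1 (d - 1)).filter (fun m => ¬ 0 < S w m),
              (univ.filter (fun p : Fin d => m ≤ (p : ℕ) ∧ ((w p : Fin d) : ℕ) < m)).card :=
              Finset.sum_le_sum hbad
        _ ≤ _ := Finset.sum_le_sum_of_subset (Finset.filter_subset _ _)
    have h2 : ∑ m ∈ Finset.Icc 1 (d - 1),
        (univ.filter (fun p : Fin d => m ≤ (p : ℕ) ∧ ((w p : Fin d) : ℕ) < m)).card
          ≤ len w := by
      rw [hlen w, auxC2 d w, auxC1 d hd w]
      exact Finset.sum_le_sum (fun p _ => auxC3 d w p)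
    omega
  refine ⟨by omega, ?_, ?_⟩
  · intro heq
    by_contra hw1
    have hL : len w ≠ 0 := fun h0 => hw1 (auxD d w ((hlen w) ▸ h0))
    omega
  · intro hw1
    subst hw1
    have hlen1 : len 1 = 0 := by
      rw [hlen, Finset.card_eq_zero, Finset.filter_eq_empty_iff]
      intro p _
      simp only [Equiv.Perm.one_apply]
      intro ⟨h1, h2⟩
      exact absurd h2 (asymm h1)
    have hNval : N = d - 1 := by
      rw [hN, Finset.filter_eq_self.2, hIcc]
      intro m hm
      rw [Finset.mem_Icc] at hm
      rw [hS]
      simp only [inv_one, Equiv.Perm.one_apply]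
      exact auxA d hd x hx hsum hne m hm.1 hm.2
    omega
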